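/- arXiv:2303.07311 — 7 statements merged into one kernel-verified Lean document; each statement's English description precedes it below -/
import Mathlib

section
/- Let $d_1$ and $d_2$ be independent exponentially distributed random variables with rate $\lambda_v > 0$. Fix $x \ge 0$ (the user–BS horizontal distance) and $r_s \ge 0$ (the BS–RIS distance), and assume $0 < h_v < h_b < h_s$. Define the blockage events $E_b = \{d_1 < x h_v/h_b\}$ and $E_s = \{d_2 < (r_s - x) h_v/h_s\}$ if $x \le r_s$, while $E_s = \{d_1 < (x - r_s) h_v/h_s\}$ if $x > r_s$. Then $\mathbb{P}(E_b \cap E_s) = (1 - e^{-\lambda_v x h_v/h_b})(1 - e^{-\lambda_v (r_s - x) h_v/h_s})$ when $0 \le x \le r_s$, and $\mathbb{P}(E_b \cap E_s) = 1 - e^{-\lambda_v (x - r_s) h_v/h_s}$ when $x > r_s$. -/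
/-!
The two blockage events are governed by the nearest blockage on each side of the user. If the
RIS lies on the other side of the user from the BS (`x ≤ rs`), the two events concern `d₁` and
`d₂` separately, so by independence their probability is the product of two exponential CDFs.
Otherwise the RIS lies between the user and the BS and is taller than the BS, so its blockage
radius `(x - rs) hv / hs` is smaller than the BS's `x hv / hb`: blocking the RIS link already
blocks the BS link, and the joint probability is that of the RIS event alone.
-/

open MeasureTheory ProbabilityTheory Real Set

lemma expMeasure_Iio_of_nonneg {r a : ℝ} (hr : 0 < r) (ha : 0 ≤ a) :
    expMeasure r (Iio a) = ENNReal.ofReal (1 - exp (-(r * a))) := by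
  rw [expMeasure, gammaMeasure, withDensity_apply _ measurableSet_Iio,
    setLIntegral_congr Iio_ae_eq_Iic]
  exact (lintegral_exponentialPDF_eq_antiDeriv hr a).trans (congrArg ENNReal.ofReal (if_pos ha))

namespace MeasureTheory.Measure

variable {α β : Type*} [MeasurableSpace α] [MeasurableSpace β] [Preorder α]

lemma prod_setOf_fst_lt_inter_snd_lt [Preorder β] (μ : Measure α) (ν : Measure β) [SFinite ν] (a : α)
    (b : β) : μ.prod ν ({p | p.1 < a} ∩ {p | p.2 < b}) = μ (Iio a) * ν (Iio b) := by
  rw [← prod_prod, Set.prod_eq]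
  rfl

lemma prod_setOf_fst_lt (μ : Measure α) (ν : Measure β) [IsProbabilityMeasure ν] (a : α) :
    μ.prod ν {p | p.1 < a} = μ (Iio a) := by
  rw [← mul_one (μ (Iio a)), ← measure_univ (μ := ν), ← prod_prod, prod_univ]
  rfl

end MeasureTheory.Measure

lemma sub_mul_div_le_mul_div {x r c b s : ℝ} (hr : 0 ≤ r) (hc : 0 ≤ c) (hb : 0 < b)
    (hbs : b ≤ s) (hxr : r ≤ x) : (x - r) * c / s ≤ x * c / b :=
  div_le_div₀ (mul_nonneg (by linarith) hc) (by gcongr; linarith) hb hbs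

/-- **Joint blockage probability (Lemma 2).**
`d₁, d₂` are independent exponential random variables with rate `λv` (modeled by the
product of two exponential measures on `ℝ × ℝ`).  With user–BS distance `x ≥ 0`,
BS–RIS distance `rs ≥ 0` and heights `0 < hv < hb < hs`, the blockage events are
`Eb = {d₁ < x·hv/hb}` and `Es = {d₂ < (rs − x)·hv/hs}` if `x ≤ rs`, while
`Es = {d₁ < (x − rs)·hv/hs}` if `x > rs`.  Then the probability of the joint event
`Eb ∩ Es` is as given in the paper. -/
theorem joint_blockage_probability
    (lv hv hb hs x rs : ℝ)
    (hlv : 0 < lv) (hx : 0 ≤ x) (hrs : 0 ≤ rs)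
    (hhv : 0 < hv) (hvb : hv < hb) (hbs : hb < hs)
    (μ : Measure (ℝ × ℝ))
    (hμ : μ = (expMeasure lv).prod (expMeasure lv))
    (Eb Es : Set (ℝ × ℝ))
    (hEb : Eb = {p : ℝ × ℝ | p.1 < x * hv / hb})
    (hEs : Es = if x ≤ rs then {p : ℝ × ℝ | p.2 < (rs - x) * hv / hs}
                else {p : ℝ × ℝ | p.1 < (x - rs) * hv / hs}) :
    μ (Eb ∩ Es) = ENNReal.ofReal
      (if x ≤ rs then
        (1 - exp (-(lv * (x * hv / hb)))) * (1 - exp (-(lv * ((rs - x) * hv / hs))))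
      else
        1 - exp (-(lv * ((x - rs) * hv / hs)))) := by
  have hb0 : 0 < hb := hhv.trans hvb
  have hs0 : 0 < hs := hb0.trans hbs
  have : IsProbabilityMeasure (expMeasure lv) := isProbabilityMeasure_expMeasure hlv
  subst hμ hEb hEs
  split_ifs with hc
  · rw [Measure.prod_setOf_fst_lt_inter_snd_lt, expMeasure_Iio_of_nonneg hlv (by positivity),
      expMeasure_Iio_of_nonneg hlv (div_nonneg (mul_nonneg (sub_nonneg.2 hc) hhv.le) hs0.le),
      ← ENNReal.ofReal_mul (sub_nonneg.2 (exp_le_one_iff.2 (neg_nonpos.2 (by positivity))))]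
  · rw [not_le] at hc
    have hRIS_sub_BS : {p : ℝ × ℝ | p.1 < (x - rs) * hv / hs} ⊆ {p | p.1 < x * hv / hb} :=
      fun _ hp => hp.trans_le (sub_mul_div_le_mul_div hrs hhv.le hb0 hbs.le hc.le)
    rw [inter_eq_self_of_subset_right hRIS_sub_BS, Measure.prod_setOf_fst_lt,
      expMeasure_Iio_of_nonneg hlv (div_nonneg (mul_nonneg (sub_nonneg.2 hc.le) hhv.le) hs0.le)]
end

section
/- Let $\lambda_b > 0$, $\rho_b > 0$, $\rho_s > 0$, $r_s \ge 0$ with $\rho_s \ne 2$ and $2 + \rho_b \ne \rho_s$, and set $T_1 = \lambda_b \rho_b$, $T_2 = \lambda_b \rho_s$, $f_s = \lambda_b r_s$. Then $\int_0^{r_s} (1 - e^{-T_1 x})(1 - e^{-T_2 (r_s - x)}) \, 2\lambda_b e^{-2\lambda_b x} \, dx + \int_{r_s}^{\infty} (1 - e^{-T_2 (x - r_s)}) \, 2\lambda_b e^{-2\lambda_b x} \, dx = 1 - 2\Big[ \frac{e^{-f_s(\rho_b + 2)} - e^{-f_s \rho_s}}{2 + \rho_b - \rho_s} + \frac{e^{-2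 f_s}}{\rho_s + 2} + \frac{1 - e^{-f_s(\rho_b + 2)}}{\rho_b + 2} + \frac{e^{-2 f_s} - e^{-f_s \rho_s}}{\rho_s - 2} \Big]$. -/
open Real MeasureTheory

lemma hasDerivAt_exp_mul_div (c x : ℝ) (hc : c ≠ 0) :
    HasDerivAt (fun y => Real.exp (c * y) / c) (Real.exp (c * x)) x := by
  have h : HasDerivAt (fun y => Real.exp (c * y)) (Real.exp (c * x) * c) x := by
    simpa using ((hasDerivAt_id x).const_mul c).exp
  simpa [mul_div_assoc, mul_div_cancel_right₀ _ hc] using h.div_const c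

lemma int_exp (c a b : ℝ) (hc : c ≠ 0) :
    ∫ x in a..b, Real.exp (c * x) = (Real.exp (c * b) - Real.exp (c * a)) / c := by
  rw [intervalIntegral.integral_eq_sub_of_hasDerivAt
      (fun x _ => hasDerivAt_exp_mul_div c x hc)
      ((Real.continuous_exp.comp (continuous_const.mul continuous_id)).intervalIntegrable a b)]
  ring

lemma int_exp_Ioi (c a : ℝ) (hc : 0 < c) :
    ∫ x in Set.Ioi a, Real.exp (-c * x) = Real.exp (-c * a) / c := by
  have hint : IntegrableOn (fun x : ℝ => Real.exp (-c * x)) (Set.Ioi a) :=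
    exp_neg_integrableOn_Ioi a hc
  have hderiv : ∀ x ∈ Set.Ici a,
      HasDerivAt (fun y => -(Real.exp (-c * y) / c)) (Real.exp (-c * x)) x := by
    intro x _
    have h := hasDerivAt_exp_mul_div (-c) x (neg_ne_zero.mpr hc.ne')
    simpa [div_neg] using h
  have htend : Filter.Tendsto (fun y => -(Real.exp (-c * y) / c))
      Filter.atTop (nhds 0) := by
    have h0 : Filter.Tendsto (fun y : ℝ => Real.exp (-c * y)) Filter.atTop (nhds 0) := by
      have hneg : Filter.Tendsto (fun y : ℝ => -c * y) Filter.atTop Filter.atBot :=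
        (Filter.tendsto_const_mul_atBot_of_neg (by linarith)).mpr Filter.tendsto_id
      exact (Real.tendsto_exp_atBot.comp hneg).congr fun y => rfl
    simpa using (h0.div_const c).neg
  rw [integral_Ioi_of_hasDerivAt_of_tendsto' hderiv hint htend]
  ring

set_option maxHeartbeats 4000000 in
lemma final_algebra (lb ρb ρs X Y Z : ℝ) (hlb : lb ≠ 0) (hX : X ≠ 0) (hY : Y ≠ 0) (hZ : Z ≠ 0)
    (h2ne : 2 + ρb - ρs ≠ 0) (h3ne : ρs - 2 ≠ 0) (h4ne : ρs + 2 ≠ 0) (h5ne : ρb + 2 ≠ 0)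
    (hρb : 0 < ρb) :
    2 * lb * (((X * X)⁻¹ - 1) / -(2 * lb)) - 2 * lb * (((X * X * Y)⁻¹ - 1) / -(2 * lb + lb * ρb)) -
          2 * lb * Z⁻¹ * ((Z * (X * X)⁻¹ - 1) / (lb * ρs - 2 * lb)) +
        2 * lb * Z⁻¹ * ((Z * (X * X * Y)⁻¹ - 1) / (lb * ρs - 2 * lb - lb * ρb)) +
      (2 * lb * ((X * X)⁻¹ / (2 * lb)) - 2 * lb * Z * ((X * X * Z)⁻¹ / (2 * lb + lb * ρs))) =
    1 - 2 * (((X * X * Y)⁻¹ - Z⁻¹) / (2 + ρb - ρs) + (X * X)⁻¹ / (ρs + 2)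
        + (1 - (X * X * Y)⁻¹) / (ρb + 2) + ((X * X)⁻¹ - Z⁻¹) / (ρs - 2)) := by
  have hb : (2:ℝ) + ρb ≠ 0 := by positivity
  have hrb2 : ρb + 2 ≠ 0 := h5ne
  have hd : ρs - 2 - ρb ≠ 0 := fun h => h2ne (by linarith)
  have t1 : ∀ u : ℝ, 2 * lb * (u / -(2 * lb)) = -u := by
    intro u; field_simp
  have t2 : ∀ u : ℝ, 2 * lb * (u / -(2 * lb + lb * ρb)) = -(2 * u) / (2 + ρb) := by
    intro u
    rw [show (2 * lb + lb * ρb) = lb * (2 + ρb) by ring]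
    field_simp
  have t3 : ∀ u : ℝ, 2 * lb * Z⁻¹ * (u / (lb * ρs - 2 * lb)) = 2 * Z⁻¹ * u / (ρs - 2) := by
    intro u
    rw [show (lb * ρs - 2 * lb) = lb * (ρs - 2) by ring]
    field_simp
  have t4 : ∀ u : ℝ, 2 * lb * Z⁻¹ * (u / (lb * ρs - 2 * lb - lb * ρb))
      = 2 * Z⁻¹ * u / (ρs - 2 - ρb) := by
    intro u
    rw [show (lb * ρs - 2 * lb - lb * ρb) = lb * (ρs - 2 - ρb) by ring]
    field_simp
  have t5 : 2 * lb * ((X * X)⁻¹ / (2 * lb)) = (X * X)⁻¹ := by field_simp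
  have t6 : 2 * lb * Z * ((X * X * Z)⁻¹ / (2 * lb + lb * ρs)) = 2 * Z * (X * X * Z)⁻¹ / (ρs + 2) := by
    rw [show (2 * lb + lb * ρs) = lb * (ρs + 2) by ring]
    field_simp
  rw [t1, t2, t3, t4, t5, t6]
  field_simp
  ring

set_option maxHeartbeats 1000000 in
/-- **Proposition 1.**  Closed form of the connection failure probability
(joint blockage probability of user–BS and user–RIS links) for fixed-distance
RIS deployment. -/
theorem connection_failure_probability_closed_form
    (lb ρb ρs rs : ℝ) (hlb : 0 < lb) (hρb : 0 < ρb) (hρs : 0 < ρs)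
    (hrs : 0 ≤ rs) (hne : ρs ≠ 2) (hne' : 2 + ρb ≠ ρs)
    (T1 T2 fs : ℝ) (hT1 : T1 = lb * ρb) (hT2 : T2 = lb * ρs) (hfs : fs = lb * rs) :
    (∫ x in (0:ℝ)..rs,
        (1 - exp (-T1 * x)) * (1 - exp (-T2 * (rs - x))) * (2 * lb * exp (-2 * lb * x)))
      + (∫ x in Set.Ioi rs, (1 - exp (-T2 * (x - rs))) * (2 * lb * exp (-2 * lb * x)))
    = 1 - 2 * ((exp (-fs * (ρb + 2)) - exp (-fs * ρs)) / (2 + ρb - ρs)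
        + exp (-2 * fs) / (ρs + 2)
        + (1 - exp (-fs * (ρb + 2))) / (ρb + 2)
        + (exp (-2 * fs) - exp (-fs * ρs)) / (ρs - 2)) := by
  subst hT1 hT2 hfs
  set c1 : ℝ := -(2 * lb) with hc1
  set c2 : ℝ := -(2 * lb + lb * ρb) with hc2
  set c3 : ℝ := lb * ρs - 2 * lb with hc3
  set c4 : ℝ := lb * ρs - 2 * lb - lb * ρb with hc4
  have hc1ne : c1 ≠ 0 := by rw [hc1]; nlinarith
  have hc2ne : c2 ≠ 0 := by rw [hc2]; nlinarith
  have hc3ne : c3 ≠ 0 := by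
    rw [hc3]; intro h
    apply hne
    have : lb * (ρs - 2) = 0 := by ring_nf; linarith [h]
    rcases mul_eq_zero.mp this with h' | h'
    · exact absurd h' hlb.ne'
    · linarith
  have hc4ne : c4 ≠ 0 := by
    rw [hc4]; intro h
    apply hne'
    have : lb * (ρs - 2 - ρb) = 0 := by ring_nf; linarith [h]
    rcases mul_eq_zero.mp this with h' | h'
    · exact absurd h' hlb.ne'
    · linarith
  -- Rewrite the first integrand as a sum of exponentials
  have h1 : (∫ x in (0:ℝ)..rs,
        (1 - exp (-(lb * ρb) * x)) * (1 - exp (-(lb * ρs) * (rs - x)))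
          * (2 * lb * exp (-2 * lb * x)))
      = ∫ x in (0:ℝ)..rs,
        (2 * lb * exp (c1 * x) - 2 * lb * exp (c2 * x)
          - 2 * lb * exp (-(lb * ρs) * rs) * exp (c3 * x)
          + 2 * lb * exp (-(lb * ρs) * rs) * exp (c4 * x)) := by
    apply intervalIntegral.integral_congr
    intro x _
    simp only [hc1, hc2, hc3, hc4]
    rw [show (-(lb * ρs) * (rs - x)) = (-(lb * ρs) * rs) + (lb * ρs * x) by ring]
    rw [Real.exp_add]
    rw [show (-(2 * lb + lb * ρb) * x) = (-(lb * ρb) * x) + (-(2*lb) * x) by ring,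
        show ((lb * ρs - 2 * lb) * x) = (lb * ρs * x) + (-(2*lb) * x) by ring,
        show ((lb * ρs - 2 * lb - lb * ρb) * x)
          = (-(lb * ρb) * x) + (lb * ρs * x) + (-(2*lb) * x) by ring]
    rw [Real.exp_add, Real.exp_add, Real.exp_add, Real.exp_add]
    ring_nf
  have cexp : ∀ c : ℝ, Continuous fun x : ℝ => Real.exp (c * x) :=
    fun c => Real.continuous_exp.comp (continuous_const.mul continuous_id)
  have i1 : ∀ K c : ℝ, IntervalIntegrable (fun x => K * Real.exp (c * x)) volume 0 rs :=
    fun K c => (continuous_const.mul (cexp c)).intervalIntegrable 0 rs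
  rw [h1]
  rw [intervalIntegral.integral_add (((i1 _ c1).sub (i1 _ c2)).sub (i1 _ c3)) (i1 _ c4),
      intervalIntegral.integral_sub ((i1 _ c1).sub (i1 _ c2)) (i1 _ c3),
      intervalIntegral.integral_sub (i1 _ c1) (i1 _ c2),
      intervalIntegral.integral_const_mul, intervalIntegral.integral_const_mul,
      intervalIntegral.integral_const_mul, intervalIntegral.integral_const_mul,
      int_exp c1 0 rs hc1ne, int_exp c2 0 rs hc2ne, int_exp c3 0 rs hc3ne,
      int_exp c4 0 rs hc4ne]
  -- Second integral
  have h2 : (∫ x in Set.Ioi rs, (1 - exp (-(lb * ρs) * (x - rs))) * (2 * lb * exp (-2 * lb * x)))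
      = ∫ x in Set.Ioi rs,
        (2 * lb * exp (-(2 * lb) * x)
          - 2 * lb * exp (lb * ρs * rs) * exp (-(2 * lb + lb * ρs) * x)) := by
    apply setIntegral_congr_fun (by measurability)
    intro x _
    have e : exp (-(lb * ρs) * (x - rs)) = exp (lb * ρs * rs) * exp (-(lb * ρs * x)) := by
      rw [← Real.exp_add]; ring_nf
    have e' : exp (-(2 * lb + lb * ρs) * x) = exp (-(lb * ρs * x)) * exp (-2 * lb * x) := by
      rw [← Real.exp_add]; ring_nf
    have e'' : exp (-(2 * lb) * x) = exp (-2 * lb * x) := by ring_nf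
    simp only [e, e', e'']
    ring
  have hb1 : (0:ℝ) < 2 * lb := by linarith
  have hb2 : (0:ℝ) < 2 * lb + lb * ρs := by nlinarith
  have j1 : IntegrableOn (fun x => 2 * lb * Real.exp (-(2 * lb) * x)) (Set.Ioi rs) :=
    (exp_neg_integrableOn_Ioi rs hb1).const_mul _
  have j2 : IntegrableOn
      (fun x => 2 * lb * Real.exp (lb * ρs * rs) * Real.exp (-(2 * lb + lb * ρs) * x))
      (Set.Ioi rs) :=
    (exp_neg_integrableOn_Ioi rs hb2).const_mul _
  rw [h2, integral_sub j1 j2, integral_const_mul, integral_const_mul,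
      int_exp_Ioi (2 * lb) rs hb1, int_exp_Ioi (2 * lb + lb * ρs) rs hb2]
  simp only [mul_zero, Real.exp_zero]
  -- Express all exponentials in terms of X, Y, Z
  set X := Real.exp (lb * rs) with hX
  set Y := Real.exp (lb * rs * ρb) with hY
  set Z := Real.exp (lb * rs * ρs) with hZ
  have hXpos := Real.exp_pos (lb * rs)
  have hYpos := Real.exp_pos (lb * rs * ρb)
  have hZpos := Real.exp_pos (lb * rs * ρs)
  have E1 : Real.exp (c1 * rs) = (X * X)⁻¹ := by
    rw [hc1, hX, ← Real.exp_add, ← Real.exp_neg]; ring_nf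
  have E2 : Real.exp (c2 * rs) = (X * X * Y)⁻¹ := by
    rw [hc2, hX, hY, ← Real.exp_add, ← Real.exp_add, ← Real.exp_neg]; ring_nf
  have E3 : Real.exp (c3 * rs) = Z * (X * X)⁻¹ := by
    rw [hc3, hX, hZ, ← Real.exp_add, ← Real.exp_neg, ← Real.exp_add]; ring_nf
  have E4 : Real.exp (c4 * rs) = Z * (X * X * Y)⁻¹ := by
    rw [hc4, hX, hY, hZ, ← Real.exp_add, ← Real.exp_add, ← Real.exp_neg, ← Real.exp_add]
    ring_nf
  have E5 : Real.exp (-(lb * ρs) * rs) = Z⁻¹ := by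
    rw [hZ, ← Real.exp_neg]; ring_nf
  have E6 : Real.exp (lb * ρs * rs) = Z := by rw [hZ]; ring_nf
  have E8 : Real.exp (-(2 * lb + lb * ρs) * rs) = (X * X * Z)⁻¹ := by
    rw [hX, hZ, ← Real.exp_add, ← Real.exp_add, ← Real.exp_neg]; ring_nf
  have E9 : Real.exp (-(lb * rs) * (ρb + 2)) = (X * X * Y)⁻¹ := by
    rw [hX, hY, ← Real.exp_add, ← Real.exp_add, ← Real.exp_neg]; ring_nf
  have E10 : Real.exp (-(lb * rs) * ρs) = Z⁻¹ := by
    rw [hZ, ← Real.exp_neg]; ring_nf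
  have E11 : Real.exp (-2 * (lb * rs)) = (X * X)⁻¹ := by
    rw [hX, ← Real.exp_add, ← Real.exp_neg]; ring_nf
  rw [E1, E2, E3, E4, E5, E6, E8, E9, E10, E11]
  have hc1v : c1 = -(2 * lb) := hc1
  have hc2v : c2 = -(2 * lb + lb * ρb) := hc2
  have hc3v : c3 = lb * ρs - 2 * lb := hc3
  have hc4v : c4 = lb * ρs - 2 * lb - lb * ρb := hc4
  rw [hc1v, hc2v, hc3v, hc4v]
  have hlbne : lb ≠ 0 := hlb.ne'
  have h2ne : (2:ℝ) + ρb - ρs ≠ 0 := fun h => hne' (by linarith)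
  have h3ne : ρs - 2 ≠ 0 := sub_ne_zero.mpr hne
  have h4ne : ρs + 2 ≠ 0 := by positivity
  have h5ne : ρb + 2 ≠ 0 := by positivity
  have d1 : -(2 * lb) ≠ 0 := by rw [← hc1v]; exact hc1ne
  have d2 : -(2 * lb + lb * ρb) ≠ 0 := by rw [← hc2v]; exact hc2ne
  have d3 : lb * ρs - 2 * lb ≠ 0 := by rw [← hc3v]; exact hc3ne
  have d4 : lb * ρs - 2 * lb - lb * ρb ≠ 0 := by rw [← hc4v]; exact hc4ne
  exact final_algebra lb ρb ρs X Y Z hlbne hXpos.ne' hYpos.ne' hZpos.ne'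
    h2ne h3ne h4ne h5ne hρb
end

section
/- Let $\lambda_b > 0$, $\rho_b > 0$, $\rho_s > 0$, $r_s \ge 0$, $T_1 = \lambda_b \rho_b$, $T_2 = \lambda_b \rho_s$, $f_s = \lambda_b r_s$, $R_s = 1/\rho_s$, and let $P_J(r_s) = \int_0^{r_s} (1 - e^{-T_1 x})(1 - e^{-T_2 (r_s - x)}) \, 2\lambda_b e^{-2\lambda_b x} dx + \int_{r_s}^{\infty} (1 - e^{-T_2 (x - r_s)}) \, 2\lambda_b e^{-2\lambda_b x} dx$. Then $\frac{e^{-2 f_s}}{1 + 2 R_s} \le P_J(r_s) \le (1 - e^{-2 f_s}) + \frac{e^{-2 f_s}}{1 + 2 R_s}$. -/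
/-!
Beyond the RIS the integral defining `P_J` is computed exactly: against the exponential density
of rate `c`, the blockage probability `1 - e^{-t (x - r)}` integrates to `e^{-c r} t / (t + c)`,
which for `t = λ_b ρ_s`, `c = 2 λ_b` is `e^{-2 f_s} / (1 + 2 R_s)`. Before the RIS the joint
blockage probability lies in `[0, 1]`, so that part lies between `0` and the mass
`1 - e^{-2 f_s}` of `[0, r_s]`.
-/

open Real MeasureTheory Set

lemma one_sub_exp_neg_mul_mem_Icc {t x : ℝ} (ht : 0 ≤ t) (hx : 0 ≤ x) :
    1 - exp (-t * x) ∈ Icc (0 : ℝ) 1 := by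
  have hle : exp (-t * x) ≤ 1 := exp_le_one_iff.mpr (by nlinarith)
  exact ⟨by linarith, by linarith [exp_pos (-t * x)]⟩

lemma intervalIntegral_exp_density (c r : ℝ) :
    ∫ x in (0 : ℝ)..r, c * exp (-c * x) = 1 - exp (-c * r) := by
  have hderiv : ∀ x ∈ uIcc (0 : ℝ) r,
      HasDerivAt (fun x => -exp (-c * x)) (c * exp (-c * x)) x := fun x _ =>
    (((hasDerivAt_id' x).const_mul (-c)).exp.fun_neg).congr_deriv (by ring)
  rw [intervalIntegral.integral_eq_sub_of_hasDerivAt hderiv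
    ((by fun_prop : Continuous fun x => c * exp (-c * x)).intervalIntegrable _ _)]
  simp only [mul_zero, exp_zero]
  ring

lemma intervalIntegral_mul_exp_density_mem_Icc {p : ℝ → ℝ} {c r : ℝ} (hc : 0 ≤ c)
    (hr : 0 ≤ r) (hp : IntervalIntegrable p volume 0 r)
    (hp_mem : ∀ x ∈ Icc 0 r, p x ∈ Icc (0 : ℝ) 1) :
    ∫ x in (0 : ℝ)..r, p x * (c * exp (-c * x)) ∈ Icc 0 (1 - exp (-c * r)) := by
  have hdens : ∀ x, 0 ≤ c * exp (-c * x) := fun x => by positivity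
  refine ⟨intervalIntegral.integral_nonneg hr fun x hx =>
    mul_nonneg (hp_mem x hx).1 (hdens x), ?_⟩
  rw [← intervalIntegral_exp_density]
  exact intervalIntegral.integral_mono_on hr (hp.mul_continuousOn (by fun_prop))
    ((by fun_prop : Continuous fun x => c * exp (-c * x)).intervalIntegrable _ _)
    fun x hx => mul_le_of_le_one_left (hdens x) (hp_mem x hx).2

lemma integral_Ioi_one_sub_exp_mul_exp_density {c t : ℝ} (hc : 0 < c) (htc : 0 < t + c)
    (r : ℝ) :
    ∫ x in Ioi r, (1 - exp (-t * (x - r))) * (c * exp (-c * x)) = exp (-c * r) * t / (t + c) := by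
  have hsplit : ∀ x, (1 - exp (-t * (x - r))) * (c * exp (-c * x))
      = c * exp (-c * x) - c * exp (t * r) * exp (-(t + c) * x) := fun x => by
    have hexp : exp (-t * (x - r)) * exp (-c * x) = exp (t * r) * exp (-(t + c) * x) := by
      rw [← exp_add, ← exp_add]
      ring_nf
    linear_combination (-c) * hexp
  have hc' : -c < 0 := by linarith
  have htc' : -(t + c) < 0 := by linarith
  simp_rw [hsplit]
  rw [integral_sub ((integrableOn_exp_mul_Ioi hc' r).const_mul c)
      ((integrableOn_exp_mul_Ioi htc' r).const_mul _),
    integral_const_mul, integral_const_mul, integral_exp_mul_Ioi hc', integral_exp_mul_Ioi htc']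
  have hexp : exp (t * r) * exp (-(t + c) * r) = exp (-c * r) := by
    rw [← exp_add]
    ring_nf
  rw [neg_div_neg_eq, neg_div_neg_eq, mul_div_assoc', mul_div_assoc', mul_assoc c, hexp]
  field_simp
  ring

/-- **Proposition 2.**  Bounds on the connection failure probability for
fixed-distance RIS deployment. -/
theorem connection_failure_probability_bounds
    (lb ρb ρs rs : ℝ) (hlb : 0 < lb) (hρb : 0 < ρb) (hρs : 0 < ρs) (hrs : 0 ≤ rs)
    (T1 T2 fs Rs : ℝ)
    (hT1 : T1 = lb * ρb) (hT2 : T2 = lb * ρs) (hfs : fs = lb * rs) (hRs : Rs = 1 / ρs)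
    (PJ : ℝ)
    (hPJ : PJ = (∫ x in (0:ℝ)..rs,
        (1 - exp (-T1 * x)) * (1 - exp (-T2 * (rs - x))) * (2 * lb * exp (-2 * lb * x)))
      + (∫ x in Set.Ioi rs, (1 - exp (-T2 * (x - rs))) * (2 * lb * exp (-2 * lb * x)))) :
    exp (-2 * fs) / (1 + 2 * Rs) ≤ PJ ∧
      PJ ≤ (1 - exp (-2 * fs)) + exp (-2 * fs) / (1 + 2 * Rs) := by
  subst hT1 hT2 hfs hRs hPJ
  have hrate : ∀ x, -2 * lb * x = -(2 * lb) * x := fun x => by ring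
  simp only [hrate]
  have hc : 0 < 2 * lb := by positivity
  have hT1 : 0 ≤ lb * ρb := by positivity
  have hT2 : 0 ≤ lb * ρs := by positivity
  obtain ⟨hhead_nonneg, hhead_le⟩ := intervalIntegral_mul_exp_density_mem_Icc hc.le hrs
    ((by fun_prop : Continuous fun x =>
      (1 - exp (-(lb * ρb) * x)) * (1 - exp (-(lb * ρs) * (rs - x)))).intervalIntegrable _ _)
    fun x hx => unitInterval.mul_mem (one_sub_exp_neg_mul_mem_Icc hT1 hx.1)
      (one_sub_exp_neg_mul_mem_Icc hT2 (sub_nonneg.mpr hx.2))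
  have hmass : -(2 * lb) * rs = -2 * (lb * rs) := by ring
  have htail : exp (-(2 * lb) * rs) * (lb * ρs) / (lb * ρs + 2 * lb)
      = exp (-2 * (lb * rs)) / (1 + 2 * (1 / ρs)) := by
    rw [hmass]
    field_simp
  rw [integral_Ioi_one_sub_exp_mul_exp_density hc (by positivity), htail]
  rw [hmass] at hhead_le
  constructor <;> linarith
end

section
/- Let $d_1, d_2$ be independent exponential random variables with rate $\lambda_v > 0$, and let $r$ be an independent random variable with density $2\lambda_b e^{-2\lambda_b x}$ on $[0, \infty)$, $\lambda_b > 0$. With $0 < h_v < h_b < h_s$, $r_s \ge 0$, $T_1 = \lambda_v h_v/h_b$, $\rho_b = T_1/\lambda_b$, define the association events $A_b = \{d_1 \ge r h_v/h_b\}$ (direct link LOS) and $A_s = \{d_1 < r h_v/h_b\} \cap \overline{E_s}$ (direct link blocked, RIS link LOS), where $E_s = \{d_2 < (r_s - r) h_v/h_s\}$ if $r \le r_s$ and $E_s = \{d_1 < (r - r_s) h_v/h_s\}$ if $r > r_s$. Then $\mathbb{P}(A_b) = \frac{2}{2 + \rho_b}$ and $\mathbb{P}(A_s) = \frac{\rho_b}{2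 + \rho_b} - P_J(r_s)$, where $P_J(r_s) = \int_0^\infty J(x, r_s)\, 2\lambda_b e^{-2\lambda_b x}\, dx$ with $J(x, r_s) = (1 - e^{-T_1 x})(1 - e^{-T_2(r_s - x)})$ for $x \le r_s$ and $J(x, r_s) = 1 - e^{-T_2(x - r_s)}$ for $x > r_s$, $T_2 = \lambda_v h_v/h_s$. -/
/-!
Condition on the BS distance `r = x`. The blockage distances `d₁, d₂` stay independent
exponentials, so the direct link is LOS with probability `exp (-T₁ x)`, and both links are blocked
with probability `J(x, rs)`: for `x ≤ rs` the two links are blocked on opposite sides,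
independently, while for `x > rs` both links cross the same side and the RIS link's blocking
interval `[0, (x - rs) h_v / h_s)` lies inside the direct link's `[0, x h_v / h_b)`.
Averaging over `r`, the Laplace transform of the exponential law gives
`ℙ(A_b) = 2λ_b / (2λ_b + T₁) = 2 / (2 + ρ_b)`, and `A_s` is "direct link blocked" minus
"both links blocked", whence `ℙ(A_s) = ρ_b / (2 + ρ_b) - P_J(rs)`.
-/

open MeasureTheory ProbabilityTheory Real Set

namespace ProbabilityTheory

instance nullSingletonClass_expMeasure (r : ℝ) : NullSingletonClass (expMeasure r) :=
  inferInstanceAs (NullSingletonClass (volume.withDensity _))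

lemma expMeasure_Iio {r x : ℝ} (hr : 0 < r) (hx : 0 ≤ x) :
    expMeasure r (Iio x) = ENNReal.ofReal (1 - exp (-(r * x))) := by
  have := isProbabilityMeasure_expMeasure hr
  rw [measure_congr Iio_ae_eq_Iic, ← ofReal_cdf, cdf_expMeasure_eq hr, if_pos hx]

lemma expMeasure_Ici {r x : ℝ} (hr : 0 < r) (hx : 0 ≤ x) :
    expMeasure r (Ici x) = ENNReal.ofReal (exp (-(r * x))) := by
  have := isProbabilityMeasure_expMeasure hr
  have hexp : exp (-(r * x)) ≤ 1 := exp_le_one_iff.2 (by nlinarith)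
  rw [← compl_Iio, prob_compl_eq_one_sub measurableSet_Iio, expMeasure_Iio hr hx,
    ← ENNReal.ofReal_one, ← ENNReal.ofReal_sub _ (by linarith), sub_sub_cancel]

lemma ae_pos_expMeasure {r : ℝ} (hr : 0 < r) : ∀ᵐ x ∂expMeasure r, 0 < x := by
  rw [ae_iff]
  simp_rw [not_lt]
  change expMeasure r (Iic 0) = 0
  simpa [← measure_congr (Iio_ae_eq_Iic (μ := expMeasure r))] using expMeasure_Iio hr le_rfl

lemma integrableOn_exponentialDensity {r : ℝ} (hr : 0 < r) :
    IntegrableOn (fun x ↦ r * exp (-(r * x))) (Ioi 0) := by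
  have := (exp_neg_integrableOn_Ioi 0 hr).const_mul r
  simp only [neg_mul] at this ⊢
  exact this

lemma integral_exp_neg_mul_mul_exponentialDensity {a r : ℝ} (h : 0 < a + r) :
    ∫ x in Ioi 0, exp (-(a * x)) * (r * exp (-(r * x))) = r / (a + r) := by
  have hprod (x : ℝ) : exp (-(a * x)) * (r * exp (-(r * x))) = r * exp (-(a + r) * x) := by
    rw [mul_left_comm, ← exp_add]; ring_nf
  simp_rw [hprod, integral_const_mul, integral_exp_mul_Ioi (neg_neg_of_pos h)]
  field_simp
  simp

lemma lintegral_ofReal_expMeasure {r : ℝ} (hr : 0 < r) {f : ℝ → ℝ} (hf : Measurable f)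
    (hf0 : ∀ x, 0 < x → 0 ≤ f x)
    (hfi : IntegrableOn (fun x ↦ f x * (r * exp (-(r * x)))) (Ioi 0)) :
    ∫⁻ x, ENNReal.ofReal (f x) ∂expMeasure r =
      ENNReal.ofReal (∫ x in Ioi 0, f x * (r * exp (-(r * x)))) := by
  have hpdf : Measurable (exponentialPDF r) := (measurable_exponentialPDFReal r).ennreal_ofReal
  rw [← Measure.restrict_eq_self_of_ae_mem (s := Ioi 0) (ae_pos_expMeasure hr),
    ofReal_integral_eq_lintegral_ofReal hfi
      ((ae_restrict_iff' measurableSet_Ioi).2 (.of_forall fun x hx ↦ by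
        have := hf0 x hx; positivity))]
  change ∫⁻ x, _ ∂(volume.withDensity (exponentialPDF r)).restrict _ = _
  rw [restrict_withDensity measurableSet_Ioi,
    lintegral_withDensity_eq_lintegral_mul _ hpdf hf.ennreal_ofReal]
  refine setLIntegral_congr_fun measurableSet_Ioi fun x (hx : 0 < x) ↦ ?_
  rw [Pi.mul_apply, exponentialPDF_of_nonneg hx.le, ← ENNReal.ofReal_mul (by positivity),
    mul_comm]

lemma expMeasure_prod_apply {β : Type*} [MeasurableSpace β] {ν : Measure β} [IsFiniteMeasure ν]
    {r : ℝ} (hr : 0 < r) {S : Set (ℝ × β)} (hS : MeasurableSet S) {p : ℝ → ℝ}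
    (hp : Measurable p) (hp0 : ∀ x, 0 < x → 0 ≤ p x)
    (hslice : ∀ x, 0 < x → ν (Prod.mk x ⁻¹' S) = ENNReal.ofReal (p x)) :
    (expMeasure r).prod ν S = ENNReal.ofReal (∫ x in Ioi 0, p x * (r * exp (-(r * x)))) := by
  have hp_le (x : ℝ) (hx : 0 < x) : p x ≤ ν.real univ := by
    rw [measureReal_def, ← ENNReal.ofReal_le_iff_le_toReal (measure_ne_top ν univ),
      ← hslice x hx]
    exact measure_mono (subset_univ _)
  have hint : IntegrableOn (fun x ↦ p x * (r * exp (-(r * x)))) (Ioi 0) :=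
    (integrableOn_exponentialDensity hr).bdd_mul hp.aestronglyMeasurable
      ((ae_restrict_iff' measurableSet_Ioi).2 (.of_forall fun x hx ↦ by
        rw [Real.norm_of_nonneg (hp0 x hx)]; exact hp_le x hx))
  rw [Measure.prod_apply hS, ← lintegral_ofReal_expMeasure hr hp hp0 hint]
  exact lintegral_congr_ae ((ae_pos_expMeasure hr).mono hslice)

end ProbabilityTheory

lemma measure_prod_preimage_fst {α β : Type*} [MeasurableSpace α] [MeasurableSpace β]
    {μ : Measure α} {ν : Measure β} [IsProbabilityMeasure ν] {s : Set α}
    (hs : MeasurableSet s) :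
    μ.prod ν (Prod.fst ⁻¹' s) = μ s := by
  rw [← Measure.fst_apply hs, Measure.fst_prod]

lemma one_sub_exp_neg_nonneg {a : ℝ} (ha : 0 ≤ a) : 0 ≤ 1 - exp (-a) := by
  simpa using exp_le_one_iff.2 (neg_nonpos.2 ha)

-- Outcomes are `ω = (r, d₁, d₂)`.
def directLinkBlocked (hv hb : ℝ) : Set (ℝ × ℝ × ℝ) :=
  {ω | ω.2.1 < ω.1 * hv / hb}

def risLinkBlocked (hv hs rs : ℝ) : Set (ℝ × ℝ × ℝ) :=
  {ω | if ω.1 ≤ rs then ω.2.2 < (rs - ω.1) * hv / hs else ω.2.1 < (ω.1 - rs) * hv / hs}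

/-- The paper's `J(x, rs)` with `T₁ = λ_v h_v / h_b`, `T₂ = λ_v h_v / h_s`: the conditional
probability, given `r = x`, that both the direct link and the RIS link are blocked. -/
noncomputable def bothLinksBlockedProb (T₁ T₂ rs x : ℝ) : ℝ :=
  if x ≤ rs then (1 - exp (-T₁ * x)) * (1 - exp (-T₂ * (rs - x)))
  else 1 - exp (-T₂ * (x - rs))

lemma measurableSet_directLinkBlocked (hv hb : ℝ) : MeasurableSet (directLinkBlocked hv hb) :=
  measurableSet_lt (by fun_prop) (by fun_prop)

lemma measurableSet_risLinkBlocked (hv hs rs : ℝ) : MeasurableSet (risLinkBlocked hv hs rs) :=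
  measurableSet_setOfPred.2 <| Measurable.ite (measurableSet_le measurable_fst measurable_const)
    (measurableSet_setOfPred.1 (measurableSet_lt (by fun_prop) (by fun_prop)))
    (measurableSet_setOfPred.1 (measurableSet_lt (by fun_prop) (by fun_prop)))

lemma compl_directLinkBlocked (hv hb : ℝ) :
    (directLinkBlocked hv hb)ᶜ = {ω | ω.2.1 ≥ ω.1 * hv / hb} := by
  ext; simp [directLinkBlocked]

lemma measurable_bothLinksBlockedProb (T₁ T₂ rs : ℝ) :
    Measurable (bothLinksBlockedProb T₁ T₂ rs) :=
  Measurable.ite measurableSet_Iic (by fun_prop) (by fun_prop)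

lemma bothLinksBlockedProb_nonneg {T₁ T₂ rs x : ℝ} (hT₁ : 0 ≤ T₁) (hT₂ : 0 ≤ T₂)
    (hx : 0 ≤ x) :
    0 ≤ bothLinksBlockedProb T₁ T₂ rs x := by
  unfold bothLinksBlockedProb
  simp only [neg_mul]
  split_ifs with h
  · exact mul_nonneg (one_sub_exp_neg_nonneg (by positivity))
      (one_sub_exp_neg_nonneg (mul_nonneg hT₂ (sub_nonneg.2 h)))
  · exact one_sub_exp_neg_nonneg (mul_nonneg hT₂ (by linarith))

lemma measure_directLinkBlocked_compl {ν : Measure ℝ} [IsProbabilityMeasure ν]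
    {r lv hv hb : ℝ} (hr : 0 < r) (hlv : 0 < lv) (hhv : 0 ≤ hv) (hhb : 0 < hb) :
    (expMeasure r).prod ((expMeasure lv).prod ν) (directLinkBlocked hv hb)ᶜ =
      ENNReal.ofReal (r / (lv * hv / hb + r)) := by
  have := isProbabilityMeasure_expMeasure hlv
  have hslice (x : ℝ) (hx : 0 < x) :
      (expMeasure lv).prod ν (Prod.mk x ⁻¹' (directLinkBlocked hv hb)ᶜ) =
      ENNReal.ofReal (exp (-(lv * hv / hb * x))) := by
    have hpre :
        Prod.mk x ⁻¹' (directLinkBlocked hv hb)ᶜ = Prod.fst ⁻¹' Ici (x * hv / hb) := by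
      ext; simp [directLinkBlocked]
    rw [hpre, measure_prod_preimage_fst measurableSet_Ici, expMeasure_Ici hlv (by positivity)]
    ring_nf
  rw [expMeasure_prod_apply hr (measurableSet_directLinkBlocked hv hb).compl (by fun_prop)
      (fun _ _ ↦ (exp_pos _).le) hslice,
    integral_exp_neg_mul_mul_exponentialDensity (by positivity)]

lemma measure_slice_directLinkBlocked_inter_risLinkBlocked {lv hv hb hs rs x : ℝ} (hlv : 0 < lv)
    (hhv : 0 ≤ hv) (hhb : 0 < hb) (hbs : hb ≤ hs) (hrs : 0 ≤ rs) (hx : 0 ≤ x) :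
    (expMeasure lv).prod (expMeasure lv)
        (Prod.mk x ⁻¹' (directLinkBlocked hv hb ∩ risLinkBlocked hv hs rs)) =
      ENNReal.ofReal (bothLinksBlockedProb (lv * hv / hb) (lv * hv / hs) rs x) := by
  have := isProbabilityMeasure_expMeasure hlv
  have hhs : 0 < hs := hhb.trans_le hbs
  unfold bothLinksBlockedProb
  by_cases hxr : x ≤ rs
  · have hslice : Prod.mk x ⁻¹' (directLinkBlocked hv hb ∩ risLinkBlocked hv hs rs) =
        Iio (x * hv / hb) ×ˢ Iio ((rs - x) * hv / hs) := by
      ext; simp [directLinkBlocked, risLinkBlocked, hxr]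
    rw [hslice, Measure.prod_prod, expMeasure_Iio hlv (by positivity),
      expMeasure_Iio hlv (div_nonneg (mul_nonneg (sub_nonneg.2 hxr) hhv) hhs.le), if_pos hxr,
      ← ENNReal.ofReal_mul (one_sub_exp_neg_nonneg (by positivity))]
    ring_nf
  · have hlt : (x - rs) * hv / hs ≤ x * hv / hb := by
      gcongr; linarith
    have hslice : Prod.mk x ⁻¹' (directLinkBlocked hv hb ∩ risLinkBlocked hv hs rs) =
        Prod.fst ⁻¹' Iio ((x - rs) * hv / hs) := by
      ext d
      simp only [directLinkBlocked, risLinkBlocked, hxr, if_false, mem_preimage, mem_inter_iff,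
        mem_ofPred_eq, mem_Iio, and_iff_right_iff_imp]
      exact fun h ↦ h.trans_le hlt
    rw [hslice, measure_prod_preimage_fst measurableSet_Iio,
      expMeasure_Iio hlv (div_nonneg (mul_nonneg (by linarith) hhv) hhs.le), if_neg hxr]
    ring_nf

lemma measure_directLinkBlocked_inter_risLinkBlocked {r lv hv hb hs rs : ℝ} (hr : 0 < r)
    (hlv : 0 < lv) (hhv : 0 ≤ hv) (hhb : 0 < hb) (hbs : hb ≤ hs) (hrs : 0 ≤ rs) :
    (expMeasure r).prod ((expMeasure lv).prod (expMeasure lv))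
        (directLinkBlocked hv hb ∩ risLinkBlocked hv hs rs) =
      ENNReal.ofReal (∫ x in Ioi 0,
        bothLinksBlockedProb (lv * hv / hb) (lv * hv / hs) rs x * (r * exp (-(r * x)))) := by
  have := isProbabilityMeasure_expMeasure hlv
  have hhs : 0 < hs := hhb.trans_le hbs
  exact expMeasure_prod_apply hr
    ((measurableSet_directLinkBlocked hv hb).inter (measurableSet_risLinkBlocked hv hs rs))
    (measurable_bothLinksBlockedProb _ _ _)
    (fun x hx ↦ bothLinksBlockedProb_nonneg (by positivity) (by positivity) hx.le)
    fun x hx ↦ measure_slice_directLinkBlocked_inter_risLinkBlocked hlv hhv hhb hbs hrs hx.le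

/-- **Association probabilities (Section III-B).**
With `(r, d₁, d₂)` independent — `r` exponential with rate `2·λb` (density
`2λb·e^{−2λb x}`), `d₁, d₂` exponential with rate `λv` — the probability of serving
via the direct link is `2/(2+ρb)` and via the RIS is `ρb/(2+ρb) − P_J(rs)`. -/
theorem association_probabilities
    (lb lv hv hb hs rs : ℝ)
    (hlb : 0 < lb) (hlv : 0 < lv) (hhv : 0 < hv) (hvb : hv < hb) (hbs : hb < hs)
    (hrs : 0 ≤ rs)
    (T1 T2 ρb : ℝ) (hT1 : T1 = lv * hv / hb) (hT2 : T2 = lv * hv / hs)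
    (hρb : ρb = T1 / lb)
    (μ : Measure (ℝ × ℝ × ℝ))
    (hμ : μ = (expMeasure (2 * lb)).prod ((expMeasure lv).prod (expMeasure lv)))
    (Ab Es As : Set (ℝ × ℝ × ℝ))
    (hAb : Ab = {ω : ℝ × ℝ × ℝ | ω.2.1 ≥ ω.1 * hv / hb})
    (hEs : Es = {ω : ℝ × ℝ × ℝ |
      if ω.1 ≤ rs then ω.2.2 < (rs - ω.1) * hv / hs
      else ω.2.1 < (ω.1 - rs) * hv / hs})
    (hAs : As = {ω : ℝ × ℝ × ℝ | ω.2.1 < ω.1 * hv / hb} ∩ Esᶜ)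
    (PJ : ℝ)
    (hPJ : PJ = ∫ x in Set.Ioi (0:ℝ),
      (if x ≤ rs then (1 - exp (-T1 * x)) * (1 - exp (-T2 * (rs - x)))
       else 1 - exp (-T2 * (x - rs))) * (2 * lb * exp (-2 * lb * x))) :
    μ Ab = ENNReal.ofReal (2 / (2 + ρb)) ∧
      μ As = ENNReal.ofReal (ρb / (2 + ρb) - PJ) := by
  have hhb : 0 < hb := hhv.trans hvb
  have hhs : 0 < hs := hhb.trans hbs
  have hT1_pos : 0 < T1 := hT1 ▸ by positivity
  have hT2_pos : 0 < T2 := hT2 ▸ by positivity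
  have h2lb : 0 < 2 * lb := by positivity
  have hρb_pos : 0 < ρb := hρb ▸ by positivity
  have := isProbabilityMeasure_expMeasure h2lb
  have := isProbabilityMeasure_expMeasure hlv
  have : IsProbabilityMeasure μ := by rw [hμ]; infer_instance
  have hD := measurableSet_directLinkBlocked hv hb
  have hLOS : μ (directLinkBlocked hv hb)ᶜ = ENNReal.ofReal (2 / (2 + ρb)) := by
    rw [hμ, measure_directLinkBlocked_compl h2lb hlv hhv.le hhb, ← hT1, hρb]
    congr 1; field_simp; ring
  have hBlocked : μ (directLinkBlocked hv hb) = ENNReal.ofReal (ρb / (2 + ρb)) := by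
    rw [← compl_compl (directLinkBlocked hv hb), prob_compl_eq_one_sub hD.compl, hLOS,
      ← ENNReal.ofReal_one, ← ENNReal.ofReal_sub _ (by positivity)]
    congr 1; field_simp; ring
  have hBoth : μ (directLinkBlocked hv hb ∩ risLinkBlocked hv hs rs) = ENNReal.ofReal PJ := by
    rw [hμ, measure_directLinkBlocked_inter_risLinkBlocked h2lb hlv hhv.le hhb hbs.le hrs,
      ← hT1, ← hT2, hPJ]
    congr 2; ext x; rw [bothLinksBlockedProb, neg_mul 2 lb, neg_mul (2 * lb) x]
  have hPJ_nonneg : 0 ≤ PJ := hPJ ▸ setIntegral_nonneg measurableSet_Ioi fun x hx ↦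
    mul_nonneg (bothLinksBlockedProb_nonneg hT1_pos.le hT2_pos.le (le_of_lt hx)) (by positivity)
  have hAs' : As = directLinkBlocked hv hb \ risLinkBlocked hv hs rs := by rw [hAs, hEs]; rfl
  refine ⟨by rw [hAb, ← compl_directLinkBlocked, hLOS], ?_⟩
  rw [hAs', ← sdiff_self_inter, measure_sdiff inter_subset_left
      (hD.inter (measurableSet_risLinkBlocked hv hs rs)).nullMeasurableSet (measure_ne_top _ _),
    hBlocked, hBoth, ENNReal.ofReal_sub _ hPJ_nonneg]
end

section
/- Let $\lambda_b > 0$, $\rho_b > 0$, $\rho_s > 0$ with $\rho_s \ne 2$ and $2 + \rho_b \ne \rho_s$, and let $P_J : [0, \infty) \to \mathbb{R}$ be given by $P_J(r_s) = 1 - 2\big[ \frac{e^{-f_s(\rho_b + 2)} - e^{-f_s \rho_s}}{2 + \rho_b - \rho_s} + \frac{e^{-2 f_s}}{\rho_s + 2} + \frac{1 - e^{-f_s(\rho_b + 2)}}{\rho_b + 2} + \frac{e^{-2 f_s} - e^{-f_s \rho_s}}{\rho_s - 2} \big]$ with $f_s = \lambda_b r_s$. Then $r_s > 0$ satisfies $\frac{d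 P_J}{d r_s}(r_s) = 0$ if and only if $x_0 := e^{-\rho_b \lambda_b r_s}$ satisfies the Lambert-type equation $x_0^{a} = a \, x_0 + c$, where $a = \frac{\rho_s - 2}{\rho_b}$ and $c = \frac{4(1 - a)}{\rho_s + 2}$. -/
/-!
With `f = λb·rs`, the failure probability is a combination of the three exponentials
`e^{-(ρb+2)f}`, `e^{-ρs f}` and `e^{-2f}`. Writing `x = e^{-ρb f}`, these are `x·e^{-2f}`,
`x^a·e^{-2f}` and `e^{-2f}` with `a = (ρs - 2)/ρb`, so the derivative factors as a nonzero
multiple of `e^{-2f}` times `x^a - (a·x + c)`.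
-/

open Real

/-- `P_J` as a function of the normalised distance `f = λb·rs`. -/
noncomputable def connectionFailureProb (ρb ρs f : ℝ) : ℝ :=
  1 - 2 * ((exp (-f * (ρb + 2)) - exp (-f * ρs)) / (2 + ρb - ρs)
    + exp (-2 * f) / (ρs + 2)
    + (1 - exp (-f * (ρb + 2))) / (ρb + 2)
    + (exp (-2 * f) - exp (-f * ρs)) / (ρs - 2))

noncomputable def connectionFailureProbDeriv (ρb ρs f : ℝ) : ℝ :=
  -2 * ((-(ρb + 2) * exp (-f * (ρb + 2)) + ρs * exp (-f * ρs)) / (2 + ρb - ρs)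
    + -2 * exp (-2 * f) / (ρs + 2)
    + (ρb + 2) * exp (-f * (ρb + 2)) / (ρb + 2)
    + (-2 * exp (-2 * f) + ρs * exp (-f * ρs)) / (ρs - 2))

theorem hasDerivAt_exp_neg_mul (m f : ℝ) :
    HasDerivAt (fun f => exp (-f * m)) (-m * exp (-f * m)) f := by
  simpa [mul_comm] using ((hasDerivAt_neg f).mul_const m).exp

theorem hasDerivAt_exp_const_mul (m f : ℝ) :
    HasDerivAt (fun f => exp (m * f)) (m * exp (m * f)) f := by
  simpa [mul_comm] using ((hasDerivAt_id f).const_mul m).exp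

theorem hasDerivAt_connectionFailureProb (ρb ρs f : ℝ) :
    HasDerivAt (connectionFailureProb ρb ρs) (connectionFailureProbDeriv ρb ρs f) f := by
  have hu := hasDerivAt_exp_neg_mul (ρb + 2) f
  have hv := hasDerivAt_exp_neg_mul ρs f
  have hw := hasDerivAt_exp_const_mul (-2) f
  have hsum := ((((hu.sub hv).div_const (2 + ρb - ρs)).add (hw.div_const (ρs + 2))).add
    ((hu.const_sub 1).div_const (ρb + 2))).add ((hw.sub hv).div_const (ρs - 2))
  refine ((hsum.const_mul 2).const_sub 1).congr_deriv ?_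
  rw [connectionFailureProbDeriv]
  ring

theorem exp_neg_mul_rpow_div {ρb f : ℝ} (hρb : ρb ≠ 0) (m : ℝ) :
    exp (-(ρb * f)) ^ (m / ρb) = exp (-(m * f)) := by
  rw [← exp_mul]
  congr 1
  field_simp

theorem connectionFailureProbDeriv_eq {ρb ρs a c : ℝ} (hρb : ρb ≠ 0) (hρb2 : ρb + 2 ≠ 0)
    (hρs2 : ρs + 2 ≠ 0) (hne : ρs - 2 ≠ 0) (hne' : 2 + ρb - ρs ≠ 0)
    (ha : a = (ρs - 2) / ρb) (hc : c = 4 * (1 - a) / (ρs + 2)) (f : ℝ) :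
    connectionFailureProbDeriv ρb ρs f =
      -2 * ρs * ρb * exp (-2 * f) / ((2 + ρb - ρs) * (ρs - 2)) *
        (exp (-(ρb * f)) ^ a - (a * exp (-(ρb * f)) + c)) := by
  have hu : exp (-f * (ρb + 2)) = exp (-(ρb * f)) * exp (-2 * f) := by
    rw [← exp_add]; ring_nf
  have hv : exp (-f * ρs) = exp (-(ρb * f)) ^ a * exp (-2 * f) := by
    rw [ha, exp_neg_mul_rpow_div hρb, ← exp_add]; ring_nf
  rw [connectionFailureProbDeriv, hu, hv, hc, ha]
  field_simp
  ring

/-- **Lemma 3 (first-order optimality condition).**  A positive RIS distance `rs`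
is a stationary point of the closed-form connection failure probability `P_J` iff
`x₀ = e^{−ρb·λb·rs}` solves the Lambert-type equation `x₀^a = a·x₀ + c`. -/
theorem optimal_ris_distance_lambert
    (lb ρb ρs : ℝ) (hlb : 0 < lb) (hρb : 0 < ρb) (hρs : 0 < ρs)
    (hne : ρs ≠ 2) (hne' : 2 + ρb ≠ ρs)
    (PJ : ℝ → ℝ)
    (hPJ : ∀ rs : ℝ, PJ rs =
      1 - 2 * ((exp (-(lb * rs) * (ρb + 2)) - exp (-(lb * rs) * ρs)) / (2 + ρb - ρs)
        + exp (-2 * (lb * rs)) / (ρs + 2)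
        + (1 - exp (-(lb * rs) * (ρb + 2))) / (ρb + 2)
        + (exp (-2 * (lb * rs)) - exp (-(lb * rs) * ρs)) / (ρs - 2)))
    (a c : ℝ) (ha : a = (ρs - 2) / ρb) (hc : c = 4 * (1 - a) / (ρs + 2)) :
    ∀ rs : ℝ, 0 < rs →
      (deriv PJ rs = 0 ↔ (exp (-(ρb * lb * rs))) ^ a = a * exp (-(ρb * lb * rs)) + c) := by
  intro rs _
  have hPJ_comp : PJ = fun r => connectionFailureProb ρb ρs (lb * r) := funext hPJ
  have hderiv : deriv PJ rs = connectionFailureProbDeriv ρb ρs (lb * rs) * lb := by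
    rw [hPJ_comp]
    exact ((hasDerivAt_connectionFailureProb ρb ρs _).comp rs
      ((hasDerivAt_id rs).const_mul lb)).deriv.trans (by simp)
  have hfactor : -2 * ρs * ρb * exp (-2 * (lb * rs)) / ((2 + ρb - ρs) * (ρs - 2)) ≠ 0 := by
    have := sub_ne_zero.mpr hne
    have := sub_ne_zero.mpr hne'
    positivity
  rw [hderiv, connectionFailureProbDeriv_eq hρb.ne' (by positivity) (by positivity)
    (sub_ne_zero.mpr hne) (sub_ne_zero.mpr hne') ha hc, mul_assoc ρb]
  rw [mul_eq_zero, or_iff_left hlb.ne', mul_eq_zero, or_iff_right hfactor, sub_eq_zero]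
end

section
/- Let $r, d_1, d_2, g, g'$ be independent random variables: $r$ with density $2\lambda_b e^{-2\lambda_b x}$ on $[0,\infty)$, $d_1, d_2$ exponential with rate $\lambda_v$, and $g, g'$ Gamma distributed with integer shape $n_0 \ge 1$ and rate $1$. Define the SNR random variable $S$ by: $S = g\, u_m v_m \ell_{ub}(r)/\sigma^2$ if $d_1 \ge r h_v/h_b$; otherwise $S = g'\, u_m v_m \ell_r(r, r_s)/\sigma^2$ if either ($r \le r_s$ and $d_2 \ge (r_s - r) h_v/h_s$) or ($r > r_s$ and $d_1 \ge (r - r_s) h_v/h_s$); otherwise $S = 0$. Then for every $\gamma > 0$, $\mathbb{P}(S > \gamma) = \int_0^\infty \Big[ e^{-T_1 x}\, F_{n_0}\!\Big(\frac{\gamma \sigma^2}{u_m v_m \ell_{ub}(x)}\Big) + \big(p_D(x) - J(x, r_s)\big)\, F_{n_0}\!\Big(\frac{\gamma \sigma^2}{u_m v_m \ell_r(x, r_s)}\Big) \Big] 2\lambda_b e^{-2\lambda_b x}\, dx$, where $p_D(x) = 1 - e^{-T_1 x}$, $J(x, r_s) = (1 - e^{-T_1 x})(1 - e^{-T_2(r_s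 - x)})$ for $x \le r_s$ and $J(x, r_s) = 1 - e^{-T_2(x - r_s)}$ for $x > r_s$, and $F_{n_0}(y) = e^{-y} \sum_{q=0}^{n_0 - 1} y^q/q!$. -/
open MeasureTheory ProbabilityTheory Real Set

/-!
Condition on the serving distance `r = x` (Fubini against the exponential density of `r`) and put
`a = x h_v / h_b`. The coverage event is then a disjoint union of two boxes in `(d₁, d₂, g, g')`:
the direct link is LOS (`d₁ ≥ a`) and `g` exceeds its threshold, or the direct link is blocked, the
RIS link is LOS and `g'` exceeds its threshold. The middle condition is itself a box:
`d₁ < a, d₂ ≥ (r_s - x) h_v / h_s` when `x ≤ r_s`, and `(x - r_s) h_v / h_s ≤ d₁ < a` when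
`x > r_s`, where the same blocker `d₁` governs both links; its probability is `p_D - J`.
By independence each box has as measure a product of exponential tails and Erlang tails
`P(g > t) = e^{-t} ∑_{q < n} t^q / q!`, the latter read off an explicit antiderivative.
-/

open Filter Topology Nat

/-- The paper's `F_n`. -/
noncomputable def erlangTail (n : ℕ) (y : ℝ) : ℝ :=
  exp (-y) * ∑ q ∈ Finset.range n, y ^ q / (q ! : ℝ)

theorem hasDerivAt_sum_range_succ_pow_div_factorial (n : ℕ) (x : ℝ) :
    HasDerivAt (fun y : ℝ => ∑ q ∈ Finset.range (n + 1), y ^ q / (q ! : ℝ))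
      (∑ q ∈ Finset.range n, x ^ q / (q ! : ℝ)) x := by
  induction n with
  | zero => simpa using hasDerivAt_const x (1 : ℝ)
  | succ n ih =>
    simp only [Finset.sum_range_succ _ (n + 1)]
    refine (ih.fun_add ((hasDerivAt_pow (n + 1) x).div_const ((n + 1)! : ℝ))).congr_deriv ?_
    rw [Finset.sum_range_succ _ n, factorial_succ]
    push_cast
    field_simp

theorem hasDerivAt_erlangTail_succ (n : ℕ) (x : ℝ) :
    HasDerivAt (erlangTail (n + 1)) (-(x ^ n / (n ! : ℝ) * exp (-x))) x := by
  refine (((hasDerivAt_neg' x).exp).fun_mul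
    (hasDerivAt_sum_range_succ_pow_div_factorial n x)).congr_deriv ?_
  rw [Finset.sum_range_succ]
  ring

theorem tendsto_erlangTail_atTop (n : ℕ) : Tendsto (erlangTail n) atTop (𝓝 0) := by
  have h : Tendsto (fun y : ℝ => ∑ q ∈ Finset.range n, y ^ q * exp (-y) / (q ! : ℝ)) atTop
      (𝓝 (∑ q ∈ Finset.range n, 0 / (q ! : ℝ))) :=
    tendsto_finsetSum _ fun q _ => (tendsto_pow_mul_exp_neg_atTop_nhds_zero q).div_const _
  simp only [zero_div, Finset.sum_const_zero] at h
  refine h.congr fun y => ?_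
  rw [erlangTail, Finset.mul_sum]
  exact Finset.sum_congr rfl fun q _ => by ring

theorem integral_Ioi_pow_div_factorial_mul_exp_neg (n : ℕ) {t : ℝ} (ht : 0 ≤ t) :
    ∫ x in Ioi t, x ^ n / (n ! : ℝ) * exp (-x) = erlangTail (n + 1) t := by
  have h := integral_Ioi_of_hasDerivAt_of_nonneg' (g := fun y => -erlangTail (n + 1) y)
    (fun x _ => (hasDerivAt_erlangTail_succ n x).neg.congr_deriv (neg_neg _))
    (fun x hx => by have : 0 ≤ x := ht.trans (le_of_lt hx); positivity)
    (by simpa using (tendsto_erlangTail_atTop (n + 1)).neg)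
  simpa using h

theorem gammaMeasure_real_Ioi_natCast {n : ℕ} (hn : 0 < n) {t : ℝ} (ht : 0 ≤ t) :
    (gammaMeasure n 1).real (Ioi t) = erlangTail n t := by
  obtain ⟨m, rfl⟩ : ∃ m, n = m + 1 := ⟨n - 1, by omega⟩
  have hpdf : ∀ x ∈ Ioi t, gammaPDF ((m + 1 : ℕ) : ℝ) 1 x
      = ENNReal.ofReal (x ^ m / (m ! : ℝ) * exp (-x)) := fun x hx => by
    rw [gammaPDF_of_nonneg (ht.trans (le_of_lt hx))]
    congr 1
    rw [one_rpow, one_mul, one_div, Nat.cast_succ, Gamma_nat_eq_factorial, add_sub_cancel_right,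
      rpow_natCast]
    ring
  rw [gammaMeasure, measureReal_def, withDensity_apply _ measurableSet_Ioi,
    setLIntegral_congr_fun measurableSet_Ioi hpdf,
    ← integral_eq_lintegral_of_nonneg_ae, integral_Ioi_pow_div_factorial_mul_exp_neg m ht]
  · exact (ae_restrict_iff' measurableSet_Ioi).2 (ae_of_all _ fun x (hx : t < x) => by
      have : 0 ≤ x := ht.trans hx.le
      positivity)
  · fun_prop

theorem expMeasure_real_Ici {r a : ℝ} (hr : 0 < r) (ha : 0 ≤ a) :
    (expMeasure r).real (Ici a) = exp (-(r * a)) := by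
  have := isProbabilityMeasure_expMeasure hr
  have hsingleton : expMeasure r {a} = 0 :=
    withDensity_absolutelyContinuous _ _ (Real.volume_singleton)
  rw [← measureReal_congr (Ioi_ae_eq_Ici' hsingleton), ← compl_Iic,
    probReal_compl_eq_one_sub measurableSet_Iic, ← cdf_eq_real, cdf_expMeasure_eq hr, if_pos ha,
    sub_sub_cancel]

theorem expMeasure_real_Iio {r a : ℝ} (hr : 0 < r) (ha : 0 ≤ a) :
    (expMeasure r).real (Iio a) = 1 - exp (-(r * a)) := by
  have := isProbabilityMeasure_expMeasure hr
  rw [← compl_Ici, probReal_compl_eq_one_sub measurableSet_Ici, expMeasure_real_Ici hr ha]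

theorem expMeasure_real_Ico {r c a : ℝ} (hr : 0 < r) (hc : 0 ≤ c) (hca : c ≤ a) :
    (expMeasure r).real (Ico c a) = exp (-(r * c)) - exp (-(r * a)) := by
  have := isProbabilityMeasure_expMeasure hr
  rw [← Ici_sdiff_Ici, measureReal_sdiff (Ici_subset_Ici.2 hca) measurableSet_Ici,
    expMeasure_real_Ici hr hc, expMeasure_real_Ici hr (hc.trans hca)]

theorem setOf_eq_union_prod_prod {α β γ δ : Type*} [LinearOrder α] {P : α × β × γ × δ → Prop}
    {a : α} {B₁ : Set α} {B₂ : Set β} {G₁ : Set γ} {G₂ : Set δ}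
    (h₁ : ∀ p, a ≤ p.1 → (P p ↔ p.2.2.1 ∈ G₁))
    (h₂ : ∀ p, p.1 < a → (P p ↔ p.1 ∈ B₁ ∧ p.2.1 ∈ B₂ ∧ p.2.2.2 ∈ G₂)) (hB₁ : B₁ ⊆ Iio a) :
    {p | P p} = Ici a ×ˢ univ ×ˢ G₁ ×ˢ univ ∪ B₁ ×ˢ B₂ ×ˢ univ ×ˢ G₂ := by
  ext p
  rcases le_or_gt a p.1 with h | h
  · have : p.1 ∉ B₁ := fun hp => (hB₁ hp).not_ge h
    simp [h₁ p h, h, this]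
  · simp [h₂ p h, h.not_ge]

theorem measureReal_union_prod_prod {α β γ δ : Type*} [MeasurableSpace α] [MeasurableSpace β]
    [MeasurableSpace γ] [MeasurableSpace δ] {μ₁ : Measure α} {μ₂ : Measure β} {μ₃ : Measure γ}
    {μ₄ : Measure δ} [IsFiniteMeasure μ₁] [IsProbabilityMeasure μ₂] [IsProbabilityMeasure μ₃]
    [IsProbabilityMeasure μ₄] {A B₁ : Set α} {B₂ : Set β} {G₁ : Set γ} {G₂ : Set δ}
    (hB₁ : MeasurableSet B₁) (hB₂ : MeasurableSet B₂) (hG₂ : MeasurableSet G₂)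
    (hAB : Disjoint A B₁) :
    (μ₁.prod (μ₂.prod (μ₃.prod μ₄))).real (A ×ˢ univ ×ˢ G₁ ×ˢ univ ∪ B₁ ×ˢ B₂ ×ˢ univ ×ˢ G₂)
      = μ₁.real A * μ₃.real G₁ + μ₁.real B₁ * (μ₂.real B₂ * μ₄.real G₂) := by
  rw [measureReal_union (hAB.set_prod_left _ _)
    (hB₁.prod (hB₂.prod (MeasurableSet.univ.prod hG₂)))]
  simp only [measureReal_prod_prod, probReal_univ, one_mul, mul_one]

theorem expMeasure_prod_apply {β : Type*} [MeasurableSpace β] {ν : Measure β} [IsFiniteMeasure ν]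
    {r : ℝ} (hr : 0 < r) {A : Set (ℝ × β)} (hA : MeasurableSet A) {F : ℝ → ℝ}
    (hF : ∀ x > 0, ν.real (Prod.mk x ⁻¹' A) = F x) :
    (expMeasure r).prod ν A = ENNReal.ofReal (∫ x in Ioi 0, F x * (r * exp (-(r * x)))) := by
  have := isProbabilityMeasure_expMeasure hr
  have hslice : Measurable fun x => ν (Prod.mk x ⁻¹' A) := measurable_measure_prodMk_left hA
  have hpdf : Measurable (exponentialPDF r) := (measurable_exponentialPDFReal r).ennreal_ofReal
  have hlin : (expMeasure r).prod ν A
      = ∫⁻ x in Ioi 0, exponentialPDF r x * ν (Prod.mk x ⁻¹' A) := by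
    rw [Measure.prod_apply hA, show expMeasure r = volume.withDensity (exponentialPDF r) from rfl,
      lintegral_withDensity_eq_lintegral_mul _ hpdf hslice, setLIntegral_congr Ioi_ae_eq_Ici,
      setLIntegral_eq_of_support_subset]
    · rfl
    · exact fun x hx => mem_Ici.2 (not_lt.1 fun h => hx (by simp [exponentialPDF_of_neg h]))
  rw [← ENNReal.ofReal_toReal (measure_ne_top _ A), hlin,
    ← integral_toReal (f := fun x => exponentialPDF r x * ν (Prod.mk x ⁻¹' A))
    (hpdf.mul hslice).aemeasurable
    (ae_of_all _ fun x => ENNReal.mul_lt_top ENNReal.ofReal_lt_top (measure_lt_top ν _))]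
  congr 1
  refine setIntegral_congr_fun measurableSet_Ioi fun x (hx : 0 < x) => ?_
  rw [ENNReal.toReal_mul, exponentialPDF_of_nonneg hx.le,
    ENNReal.toReal_ofReal (by positivity), ← measureReal_def, hF x hx, mul_comm]

theorem lt_snr_iff {hv hb hs rs um vm σ2 γ x ℓ₁ ℓ₂ : ℝ} (hσ : 0 < σ2) (hγ : 0 < γ)
    (hG₁ : 0 < um * vm * ℓ₁) (hG₂ : 0 < um * vm * ℓ₂) {s : ℝ × ℝ × ℝ × ℝ → ℝ}
    (hs_eq : ∀ p, s p = if p.1 ≥ x * hv / hb then p.2.2.1 * um * vm * ℓ₁ / σ2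
      else if (x ≤ rs ∧ p.2.1 ≥ (rs - x) * hv / hs) ∨ (rs < x ∧ p.1 ≥ (x - rs) * hv / hs)
        then p.2.2.2 * um * vm * ℓ₂ / σ2
      else 0) (p : ℝ × ℝ × ℝ × ℝ) :
    γ < s p ↔ if x * hv / hb ≤ p.1 then γ * σ2 / (um * vm * ℓ₁) < p.2.2.1
      else ((x ≤ rs ∧ (rs - x) * hv / hs ≤ p.2.1) ∨ (rs < x ∧ (x - rs) * hv / hs ≤ p.1))
        ∧ γ * σ2 / (um * vm * ℓ₂) < p.2.2.2 := by
  simp only [hs_eq, ge_iff_le]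
  split_ifs with hdirect hlos
  · rw [lt_div_iff₀ hσ, div_lt_iff₀ hG₁]
    simp only [mul_assoc]
  · rw [lt_div_iff₀ hσ, div_lt_iff₀ hG₂]
    simp only [mul_assoc, hlos, true_and]
  · simp [hlos, hγ.not_gt]

theorem measureReal_setOf_lt_snr {lv hv hb hs rs um vm σ2 γ x ℓ₁ ℓ₂ : ℝ} {n : ℕ}
    (hlv : 0 < lv) (hhv : 0 < hv) (hvb : hv < hb) (hbs : hb < hs) (hrs : 0 ≤ rs) (hx : 0 ≤ x)
    (hσ : 0 < σ2) (hγ : 0 < γ) (hn : 0 < n) (hG₁ : 0 < um * vm * ℓ₁) (hG₂ : 0 < um * vm * ℓ₂)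
    {s : ℝ × ℝ × ℝ × ℝ → ℝ}
    (hs_eq : ∀ p, s p = if p.1 ≥ x * hv / hb then p.2.2.1 * um * vm * ℓ₁ / σ2
      else if (x ≤ rs ∧ p.2.1 ≥ (rs - x) * hv / hs) ∨ (rs < x ∧ p.1 ≥ (x - rs) * hv / hs)
        then p.2.2.2 * um * vm * ℓ₂ / σ2
      else 0) :
    ((expMeasure lv).prod ((expMeasure lv).prod ((gammaMeasure n 1).prod
        (gammaMeasure n 1)))).real {p | γ < s p}
      = exp (-(lv * (x * hv / hb))) * erlangTail n (γ * σ2 / (um * vm * ℓ₁))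
        + (if x ≤ rs then (1 - exp (-(lv * (x * hv / hb)))) * exp (-(lv * ((rs - x) * hv / hs)))
            else exp (-(lv * ((x - rs) * hv / hs))) - exp (-(lv * (x * hv / hb))))
          * erlangTail n (γ * σ2 / (um * vm * ℓ₂)) := by
  have := isProbabilityMeasure_expMeasure hlv
  have := isProbabilityMeasure_gammaMeasure (Nat.cast_pos.2 hn) one_pos
  have hb0 : 0 < hb := hhv.trans hvb
  have hs0 : 0 < hs := hb0.trans hbs
  have hcover := lt_snr_iff hσ hγ hG₁ hG₂ hs_eq
  set a := x * hv / hb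
  set t₁ := γ * σ2 / (um * vm * ℓ₁)
  set t₂ := γ * σ2 / (um * vm * ℓ₂)
  have ht₁ : 0 ≤ t₁ := by positivity
  have ht₂ : 0 ≤ t₂ := by positivity
  have h_direct (p : ℝ × ℝ × ℝ × ℝ) (hp : a ≤ p.1) : γ < s p ↔ p.2.2.1 ∈ Ioi t₁ := by
    rw [hcover, if_pos hp, mem_Ioi]
  rcases le_or_gt x rs with hxr | hxr
  · have hrsx : 0 ≤ (rs - x) * hv / hs := div_nonneg (mul_nonneg (sub_nonneg.2 hxr) hhv.le) hs0.le
    rw [setOf_eq_union_prod_prod (B₁ := Iio a) (B₂ := Ici ((rs - x) * hv / hs)) (G₂ := Ioi t₂)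
        h_direct (fun p hp => by simp [hcover, hp.not_ge, hxr, hxr.not_gt, hp]) subset_rfl,
      measureReal_union_prod_prod measurableSet_Iio measurableSet_Ici measurableSet_Ioi
        (Ici_disjoint_Iio le_rfl),
      expMeasure_real_Ici hlv (by positivity), expMeasure_real_Iio hlv (by positivity),
      expMeasure_real_Ici hlv hrsx, gammaMeasure_real_Ioi_natCast hn ht₁,
      gammaMeasure_real_Ioi_natCast hn ht₂, if_pos hxr]
    ring
  · have hxrs : 0 ≤ (x - rs) * hv / hs :=
      div_nonneg (mul_nonneg (sub_nonneg.2 hxr.le) hhv.le) hs0.le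
    have hca : (x - rs) * hv / hs ≤ a := div_le_div₀ (by positivity) (by nlinarith) hb0 hbs.le
    rw [setOf_eq_union_prod_prod (B₁ := Ico ((x - rs) * hv / hs) a) (B₂ := univ) (G₂ := Ioi t₂)
        h_direct (fun p hp => by simp [hcover, hp.not_ge, hxr, hxr.not_ge, hp])
        Ico_subset_Iio_self,
      measureReal_union_prod_prod measurableSet_Ico MeasurableSet.univ measurableSet_Ioi
        ((Ici_disjoint_Iio le_rfl).mono_right Ico_subset_Iio_self),
      expMeasure_real_Ici hlv (by positivity), expMeasure_real_Ico hlv hxrs hca, probReal_univ,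
      gammaMeasure_real_Ioi_natCast hn ht₁, gammaMeasure_real_Ioi_natCast hn ht₂,
      if_neg hxr.not_ge]
    ring

theorem snr_coverage_probability_general
    (lb lv hv hb hs rs K α um vm σ2 γ : ℝ) (n0 N : ℕ)
    (hlb : 0 < lb) (hlv : 0 < lv) (hhv : 0 < hv) (hvb : hv < hb) (hbs : hb < hs)
    (hrs : 0 ≤ rs) (hK : 0 < K) (hum : 0 < um) (hvm : 0 < vm)
    (hσ : 0 < σ2) (hγ : 0 < γ) (hn0 : 1 ≤ n0) (hN : 2 ≤ N)
    (T1 T2 : ℝ) (hT1 : T1 = lv * hv / hb) (hT2 : T2 = lv * hv / hs)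
    (ℓub ℓr : ℝ → ℝ) (pD J : ℝ → ℝ) (Fc : ℝ → ℝ)
    (hℓub : ∀ x, ℓub x = K * (Real.sqrt (x ^ 2 + hb ^ 2)) ^ (-α))
    (hℓr : ∀ x, ℓr x = Real.pi * ((N : ℝ) - 1) ^ 2
      * (K * (Real.sqrt (rs ^ 2 + (hs - hb) ^ 2)) ^ (-α))
      * (K * (Real.sqrt (|x - rs| ^ 2 + hs ^ 2)) ^ (-α)))
    (hpD : ∀ x, pD x = 1 - exp (-T1 * x))
    (hJ : ∀ x, J x = if x ≤ rs then (1 - exp (-T1 * x)) * (1 - exp (-T2 * (rs - x)))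
      else 1 - exp (-T2 * (x - rs)))
    (hFc : ∀ y, Fc y = exp (-y) * ∑ q ∈ Finset.range n0, y ^ q / (q.factorial : ℝ))
    (μ : Measure (ℝ × ℝ × ℝ × ℝ × ℝ))
    (hμ : μ = (expMeasure (2 * lb)).prod ((expMeasure lv).prod ((expMeasure lv).prod
      ((gammaMeasure (n0 : ℝ) 1).prod (gammaMeasure (n0 : ℝ) 1)))))
    (S : ℝ × ℝ × ℝ × ℝ × ℝ → ℝ)
    (hS : ∀ ω : ℝ × ℝ × ℝ × ℝ × ℝ,
      S ω = if ω.2.1 ≥ ω.1 * hv / hb then ω.2.2.2.1 * um * vm * ℓub ω.1 / σ2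
        else if (ω.1 ≤ rs ∧ ω.2.2.1 ≥ (rs - ω.1) * hv / hs)
            ∨ (rs < ω.1 ∧ ω.2.1 ≥ (ω.1 - rs) * hv / hs)
          then ω.2.2.2.2 * um * vm * ℓr ω.1 / σ2
        else 0) :
    μ {ω | S ω > γ} = ENNReal.ofReal (∫ x in Set.Ioi (0:ℝ),
      (exp (-T1 * x) * Fc (γ * σ2 / (um * vm * ℓub x))
        + (pD x - J x) * Fc (γ * σ2 / (um * vm * ℓr x)))
      * (2 * lb * exp (-2 * lb * x))) := by
  subst hT1 hT2 hμ
  have := isProbabilityMeasure_expMeasure hlv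
  have := isProbabilityMeasure_gammaMeasure (Nat.cast_pos.2 hn0) one_pos
  have hb0 : 0 < hb := hhv.trans hvb
  have hs0 : 0 < hs := hb0.trans hbs
  have hsb : 0 < hs - hb := sub_pos.2 hbs
  have hN1 : (0 : ℝ) < N - 1 := by
    have : (2 : ℝ) ≤ N := by exact_mod_cast hN
    linarith
  have hG₁ : ∀ x, 0 < um * vm * ℓub x := fun x => by rw [hℓub]; positivity
  have hG₂ : ∀ x, 0 < um * vm * ℓr x := fun x => by rw [hℓr]; positivity
  have hS_meas : Measurable S := by
    rw [funext hS, funext hℓub, funext hℓr]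
    exact Measurable.ite (measurableSet_le (by fun_prop) (by fun_prop)) (by fun_prop)
      (Measurable.ite (measurableSet_setOfPred.2 (by fun_prop)) (by fun_prop) measurable_const)
  rw [expMeasure_prod_apply (by positivity) (measurableSet_lt measurable_const hS_meas)
    fun x hx => measureReal_setOf_lt_snr hlv hhv hvb hbs hrs hx.le hσ hγ hn0 (hG₁ x) (hG₂ x)
      fun p => hS (x, p)]
  have hFc' : Fc = erlangTail n0 := funext hFc
  congr 1
  refine setIntegral_congr_fun measurableSet_Ioi fun x _ => ?_
  rw [hFc', hpD, hJ]
  split_ifs <;> ring_nf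

/-- **Theorem 1 (SNR coverage probability, fixed-distance RIS deployment).**
The probability space is `(r, d₁, d₂, g, g')` with `r` exponential of rate `2λb`,
`d₁, d₂` exponential of rate `λv`, and `g, g'` Gamma of integer shape `n₀` and rate `1`,
all independent.  The SNR `S` equals the direct-link SNR when the direct link is LOS,
the via-RIS SNR when the direct link is blocked but the RIS link is LOS, and `0`
otherwise.  Then `ℙ(S > γ)` equals the stated integral. -/
theorem snr_coverage_probability
    (lb lv hv hb hs rs K α um vm σ2 γ : ℝ) (n0 N : ℕ)
    (hlb : 0 < lb) (hlv : 0 < lv) (hhv : 0 < hv) (hvb : hv < hb) (hbs : hb < hs)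
    (hrs : 0 ≤ rs) (hK : 0 < K) (hα : 0 < α) (hum : 0 < um) (hvm : 0 < vm)
    (hσ : 0 < σ2) (hγ : 0 < γ) (hn0 : 1 ≤ n0) (hN : 2 ≤ N)
    (T1 T2 : ℝ) (hT1 : T1 = lv * hv / hb) (hT2 : T2 = lv * hv / hs)
    (ℓub ℓr : ℝ → ℝ) (pD J : ℝ → ℝ) (Fc : ℝ → ℝ)
    (hℓub : ∀ x, ℓub x = K * (Real.sqrt (x ^ 2 + hb ^ 2)) ^ (-α))
    (hℓr : ∀ x, ℓr x = Real.pi * ((N : ℝ) - 1) ^ 2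
      * (K * (Real.sqrt (rs ^ 2 + (hs - hb) ^ 2)) ^ (-α))
      * (K * (Real.sqrt (|x - rs| ^ 2 + hs ^ 2)) ^ (-α)))
    (hpD : ∀ x, pD x = 1 - exp (-T1 * x))
    (hJ : ∀ x, J x = if x ≤ rs then (1 - exp (-T1 * x)) * (1 - exp (-T2 * (rs - x)))
      else 1 - exp (-T2 * (x - rs)))
    (hFc : ∀ y, Fc y = exp (-y) * ∑ q ∈ Finset.range n0, y ^ q / (q.factorial : ℝ))
    (μ : Measure (ℝ × ℝ × ℝ × ℝ × ℝ))
    (hμ : μ = (expMeasure (2 * lb)).prod ((expMeasure lv).prod ((expMeasure lv).prod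
      ((gammaMeasure (n0 : ℝ) 1).prod (gammaMeasure (n0 : ℝ) 1)))))
    (S : ℝ × ℝ × ℝ × ℝ × ℝ → ℝ)
    (hS : ∀ ω : ℝ × ℝ × ℝ × ℝ × ℝ,
      S ω = if ω.2.1 ≥ ω.1 * hv / hb then ω.2.2.2.1 * um * vm * ℓub ω.1 / σ2
        else if (ω.1 ≤ rs ∧ ω.2.2.1 ≥ (rs - ω.1) * hv / hs)
            ∨ (rs < ω.1 ∧ ω.2.1 ≥ (ω.1 - rs) * hv / hs)
          then ω.2.2.2.2 * um * vm * ℓr ω.1 / σ2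
        else 0) :
    μ {ω | S ω > γ} = ENNReal.ofReal (∫ x in Set.Ioi (0:ℝ),
      (exp (-T1 * x) * Fc (γ * σ2 / (um * vm * ℓub x))
        + (pD x - J x) * Fc (γ * σ2 / (um * vm * ℓr x)))
      * (2 * lb * exp (-2 * lb * x))) :=
  snr_coverage_probability_general lb lv hv hb hs rs K α um vm σ2 γ n0 N hlb hlv hhv hvb hbs hrs hK
    hum hvm hσ hγ hn0 hN T1 T2 hT1 hT2 ℓub ℓr pD J Fc hℓub hℓr hpD hJ hFc μ hμ S hS
end

section
/- Fix $f \in (0, 1)$ and $R_b > 0$. Then the function $G(R_s) = \frac{(f-1)(f-2)}{2(4 R_s + 1 - f)} + \frac{f^3}{2(4 R_b + f)(4 R_s + f)} + \frac{2 R_s}{(4 R_s + 1 - f)(2 R_s + 1)}$ is strictly decreasing in $R_s$ on $(0, \infty)$. -/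
open Set

/-- **Monotonicity of the joint blockage probability in the RIS height (remark after
(23)).**  For fixed `f ∈ (0,1)` and `Rb > 0`, the closed-form connection failure
probability is strictly decreasing in `Rs` on `(0, ∞)`. -/
theorem connection_failure_strictAnti_in_Rs
    (f Rb : ℝ) (hf0 : 0 < f) (hf1 : f < 1) (hRb : 0 < Rb)
    (G : ℝ → ℝ)
    (hG : ∀ Rs, G Rs = (f - 1) * (f - 2) / (2 * (4 * Rs + 1 - f))
      + f ^ 3 / (2 * (4 * Rb + f) * (4 * Rs + f))
      + 2 * Rs / ((4 * Rs + 1 - f) * (2 * Rs + 1))) :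
    StrictAntiOn G (Ioi (0:ℝ)) := by
  intro x hx y hy hxy
  simp only [mem_Ioi] at hx hy
  rw [hG, hG]
  set c : ℝ := (f - 1) * (f - 2) with hc
  have hcpos : 0 < c := by nlinarith
  have hax : 0 < 4 * x + 1 - f := by linarith
  have hay : 0 < 4 * y + 1 - f := by linarith
  have hbx : 0 < 2 * x + 1 := by linarith
  have hby : 0 < 2 * y + 1 := by linarith
  have hfx : 0 < 4 * x + f := by linarith
  have hfy : 0 < 4 * y + f := by linarith
  have hB : 0 < 4 * Rb + f := by linarith
  -- middle term is strictly decreasing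
  have hmid : f ^ 3 / (2 * (4 * Rb + f) * (4 * y + f))
      < f ^ 3 / (2 * (4 * Rb + f) * (4 * x + f)) := by
    apply div_lt_div_of_pos_left (by positivity) (by positivity)
    nlinarith
  -- combined first and third term
  have hcomb : ∀ z : ℝ, 0 < z →
      c / (2 * (4 * z + 1 - f)) + 2 * z / ((4 * z + 1 - f) * (2 * z + 1))
        = ((2 * c + 4) * z + c) / (2 * (4 * z + 1 - f) * (2 * z + 1)) := by
    intro z hz
    have h1 : (4 * z + 1 - f) ≠ 0 := by nlinarith
    have h2 : (2 * z + 1) ≠ 0 := by nlinarith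
    field_simp
    ring
  have hmain : ((2 * c + 4) * y + c) / (2 * (4 * y + 1 - f) * (2 * y + 1))
      < ((2 * c + 4) * x + c) / (2 * (4 * x + 1 - f) * (2 * x + 1)) := by
    rw [div_lt_div_iff₀ (by positivity) (by positivity)]
    nlinarith [mul_pos hcpos (mul_pos (sub_pos.2 hxy) (mul_pos hx hy)),
      mul_pos (sub_pos.2 hxy) (mul_pos hx hy),
      mul_pos hcpos (mul_pos (sub_pos.2 hxy) hx),
      mul_pos hcpos (mul_pos (sub_pos.2 hxy) hy),
      mul_nonneg (sub_pos.2 hxy).le (sq_nonneg (f - 1))]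
  have e1 := hcomb x hx
  have e2 := hcomb y hy
  linarith
end
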